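/- Let V be a pointwise finite-dimensional rank-maximal persistence module over a poset P whose pointwise dimensions are bounded by M. Then for every p ≤ q in P, rank V(p ≤ q) = Σ_{i=1}^{M} rank V^(i)(p ≤ q), where rank V^(i)(p ≤ q) equals 1 if both p and q lie in supp^(i) V and equals 0 otherwise. -/

import Mathlib

open CategoryTheory CategoryTheory.Limits

noncomputable section

/-- Two elements `p q` of a subset `S` of a poset are order-connected in `S` if there is a
finite sequence of elements of `S` from `p` to `q` with consecutive terms comparable. -/
def OrderConnIn {P : Type} [PartialOrder P] (S : Set P) (p q : P) : Prop :=
  p ∈ S ∧ Relation.ReflTransGen (fun a b => b ∈ S ∧ (a ≤ b ∨ b ≤ a)) p q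

/-- A subset `S` of a poset is convex if `p ≤ r ≤ q` with `p, q ∈ S` implies `r ∈ S`. -/
def IsConvexSubset {P : Type} [PartialOrder P] (S : Set P) : Prop :=
  ∀ ⦃p r q : P⦄, p ∈ S → q ∈ S → p ≤ r → r ≤ q → r ∈ S

/-- An interval of a poset: a convex subset any two of whose elements are order-connected. -/
def IsPosetInterval {P : Type} [PartialOrder P] (S : Set P) : Prop :=
  IsConvexSubset S ∧ ∀ p ∈ S, ∀ q ∈ S, OrderConnIn S p q

open Classical in
/-- The submodule of `F` which is everything at points of `I` and zero elsewhere. -/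
def indSub (F : Type) [Field F] {P : Type} (I : Set P) (p : P) : Submodule F F :=
  if p ∈ I then ⊤ else ⊥

open Classical in
/-- The canonical map between submodules of `F`: the inclusion when it exists, zero otherwise. -/
def indMap (F : Type) [Field F] (S T : Submodule F F) : S →ₗ[F] T :=
  if h : S ≤ T then Submodule.inclusion h else 0

theorem indSub_subsingleton {F : Type} [Field F] {P : Type} {I : Set P} {p : P}
    (hp : p ∉ I) : Subsingleton (indSub F I p) := by
  rw [indSub, if_neg hp]
  infer_instance

theorem indMap_comp (F : Type) [Field F] {P : Type} [PartialOrder P] {I : Set P}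
    (hI : IsConvexSubset I) {p q r : P} (hpq : p ≤ q) (hqr : q ≤ r) :
    (indMap F (indSub F I q) (indSub F I r)).comp (indMap F (indSub F I p) (indSub F I q))
      = indMap F (indSub F I p) (indSub F I r) := by
  by_cases hp : p ∈ I
  · by_cases hr : r ∈ I
    · have hq : q ∈ I := hI hp hr hpq hqr
      have h1 : indSub F I p ≤ indSub F I q := by simp [indSub, hp, hq]
      have h2 : indSub F I q ≤ indSub F I r := by simp [indSub, hq, hr]
      have h3 : indSub F I p ≤ indSub F I r := h1.trans h2
      simp only [indMap, dif_pos h1, dif_pos h2, dif_pos h3]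
      ext x
      rfl
    · haveI := indSub_subsingleton (F := F) (I := I) hr
      exact LinearMap.ext fun x => Subsingleton.elim _ _
  · haveI := indSub_subsingleton (F := F) (I := I) hp
    apply LinearMap.ext
    intro x
    rw [Subsingleton.elim x 0]
    simp

/-- The indicator persistence module of a convex subset `I` of a poset `P`: it assigns `F` to
points of `I` and `0` to other points, with identity structure maps between points of `I` and
zero maps otherwise. -/
def indicatorModule (F : Type) [Field F] {P : Type} [PartialOrder P] (I : Set P)
    (hI : IsConvexSubset I) : P ⥤ ModuleCat.{0} F where
  obj p := ModuleCat.of F (indSub F I p)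
  map {p q} f := ModuleCat.ofHom (indMap F (indSub F I p) (indSub F I q))
  map_id p := by
    apply ModuleCat.hom_ext
    change indMap F (indSub F I p) (indSub F I p) = LinearMap.id
    simp only [indMap, dif_pos le_rfl]
    ext x
    rfl
  map_comp {p q r} f g := by
    apply ModuleCat.hom_ext
    change _ = (indMap F (indSub F I q) (indSub F I r)).comp
      (indMap F (indSub F I p) (indSub F I q))
    rw [indMap_comp F hI f.le g.le]
    rfl

/-- The support of a persistence module: the points where it is nonzero. -/
def suppMod (F : Type) [Field F] {P : Type} [PartialOrder P] (V : P ⥤ ModuleCat.{0} F) :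
    Set P := {p | Nontrivial (V.obj p)}

/-- The rank of the structure map of `V` associated to `p ≤ q`. -/
def rankMap (F : Type) [Field F] {P : Type} [PartialOrder P] (V : P ⥤ ModuleCat.{0} F)
    {p q : P} (h : p ≤ q) : ℕ :=
  Module.finrank F (LinearMap.range (V.map (homOfLE h)).hom)

/-- A persistence module is antichain-decomposable if it is isomorphic to a direct sum of
indicator modules of intervals whose elements are pairwise incomparable across distinct
summands. -/
def IsACD (F : Type) [Field F] {P : Type} [PartialOrder P] (V : P ⥤ ModuleCat.{0} F) : Prop :=
  ∃ (A : Type) (S : A → Set P) (hS : ∀ α, IsPosetInterval (S α)),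
    (∀ ⦃α β : A⦄, α ≠ β → ∀ p ∈ S α, ∀ q ∈ S β, ¬ p ≤ q ∧ ¬ q ≤ p) ∧
    Nonempty (V ≅ ∐ fun α => indicatorModule F (S α) (hS α).1)

/-- A persistence module is thin if it is pointwise of dimension `0` or `1`. -/
def IsThin (F : Type) [Field F] {P : Type} [PartialOrder P] (V : P ⥤ ModuleCat.{0} F) : Prop :=
  ∀ p : P, Module.rank F (V.obj p) = 0 ∨ Module.rank F (V.obj p) = 1

/-- A persistence module is rank-maximal if the rank of each structure map is the minimum of
the dimensions of its domain and codomain. -/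
def RankMaximal (F : Type) [Field F] {P : Type} [PartialOrder P] (V : P ⥤ ModuleCat.{0} F) :
    Prop :=
  ∀ ⦃p q : P⦄ (h : p ≤ q),
    rankMap F V h = min (Module.finrank F (V.obj p)) (Module.finrank F (V.obj q))

/-- The `i`-th superlevel set of a persistence module: the points of dimension at least `i`. -/
def suppLevel (F : Type) [Field F] {P : Type} [PartialOrder P] (V : P ⥤ ModuleCat.{0} F)
    (i : ℕ) : Set P := {p | i ≤ Module.finrank F (V.obj p)}

theorem suppLevel_convex (F : Type) [Field F] {P : Type} [PartialOrder P]
    (V : P ⥤ ModuleCat.{0} F) (hfd : ∀ p, FiniteDimensional F (V.obj p))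
    (hrm : RankMaximal F V) (i : ℕ) : IsConvexSubset (suppLevel F V i) := by
  intro p r q hp hq hpr hrq
  haveI := hfd r
  haveI := hfd q
  have hfac : V.map (homOfLE (hpr.trans hrq)) = V.map (homOfLE hpr) ≫ V.map (homOfLE hrq) := by
    rw [← V.map_comp]
    rfl
  have h1 : rankMap F V (hpr.trans hrq) ≤ Module.finrank F (V.obj r) := by
    rw [rankMap, hfac]
    calc Module.finrank F (LinearMap.range (V.map (homOfLE hpr) ≫ V.map (homOfLE hrq)).hom)
        ≤ Module.finrank F (LinearMap.range (V.map (homOfLE hrq)).hom) :=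
          Submodule.finrank_mono (LinearMap.range_comp_le_range _ _)
      _ ≤ Module.finrank F (V.obj r) := LinearMap.finrank_range_le _
  exact le_trans (le_trans (le_min hp hq) (hrm (hpr.trans hrq)).ge) h1

/-- The `i`-th superlevel module of a rank-maximal pointwise finite-dimensional persistence
module: the indicator module of the `i`-th superlevel set. -/
def superMod (F : Type) [Field F] {P : Type} [PartialOrder P] (V : P ⥤ ModuleCat.{0} F)
    (hfd : ∀ p, FiniteDimensional F (V.obj p)) (hrm : RankMaximal F V) (i : ℕ) :
    P ⥤ ModuleCat.{0} F :=
  indicatorModule F (suppLevel F V i) (suppLevel_convex F V hfd hrm i)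

theorem Finset.Icc_filter_le_of_le_right {α : Type*} [Preorder α] [LocallyFiniteOrder α]
    {a b c : α} [DecidablePred (· ≤ c)] (h : c ≤ b) :
    {x ∈ Icc a b | x ≤ c} = Icc a c := by
  ext x
  simp only [Finset.mem_filter, Finset.mem_Icc]
  exact ⟨fun ⟨⟨hax, _⟩, hxc⟩ => ⟨hax, hxc⟩, fun ⟨hax, hxc⟩ => ⟨⟨hax, hxc.trans h⟩, hxc⟩⟩

theorem Nat.sum_Icc_one_ite_le {m M : ℕ} (h : m ≤ M) :
    ∑ i ∈ Finset.Icc 1 M, (if i ≤ m then 1 else 0) = m := by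
  rw [Finset.sum_boole, Finset.Icc_filter_le_of_le_right h, Nat.card_Icc, Nat.cast_id,
    Nat.add_sub_cancel]

theorem mem_suppLevel_and_mem_suppLevel_iff (F : Type) [Field F] {P : Type} [PartialOrder P]
    (V : P ⥤ ModuleCat.{0} F) {p q : P} {i : ℕ} :
    p ∈ suppLevel F V i ∧ q ∈ suppLevel F V i ↔
      i ≤ min (Module.finrank F (V.obj p)) (Module.finrank F (V.obj q)) := by
  rw [le_min_iff]
  rfl

open Classical in
theorem rank_maximal_rank_eq_sum_general (F : Type) [Field F] {P : Type} [PartialOrder P]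
    (V : P ⥤ ModuleCat.{0} F)
    (hrm : RankMaximal F V) (M : ℕ) (hM : ∀ p, Module.finrank F (V.obj p) ≤ M)
    {p q : P} (h : p ≤ q) :
    rankMap F V h = ∑ i ∈ Finset.Icc 1 M,
      (if p ∈ suppLevel F V i ∧ q ∈ suppLevel F V i then 1 else 0) := by
  simp_rw [mem_suppLevel_and_mem_suppLevel_iff, hrm h]
  exact (Nat.sum_Icc_one_ite_le ((min_le_left _ _).trans (hM p))).symm

open Classical in
/-- for a pointwise finite-dimensional rank-maximal module with pointwise
dimensions bounded by `M`, the rank of each structure map `V(p ≤ q)` is the sum over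
`i = 1, …, M` of the ranks of the superlevel structure maps, the `i`-th of which is `1` when
both `p` and `q` lie in `supp^(i) V` and `0` otherwise. -/
theorem rank_maximal_rank_eq_sum (F : Type) [Field F] {P : Type} [PartialOrder P]
    (V : P ⥤ ModuleCat.{0} F) (hfd : ∀ p, FiniteDimensional F (V.obj p))
    (hrm : RankMaximal F V) (M : ℕ) (hM : ∀ p, Module.finrank F (V.obj p) ≤ M)
    {p q : P} (h : p ≤ q) :
    rankMap F V h = ∑ i ∈ Finset.Icc 1 M,
      (if p ∈ suppLevel F V i ∧ q ∈ suppLevel F V i then 1 else 0) :=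
  rank_maximal_rank_eq_sum_general F V hrm M hM h

end
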